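/- Let m ≥ 2, 0 ≤ s ≤ m+1, let I, J ⊆ ℝ be open intervals with x + y > 0 for all x ∈ I, y ∈ J, and let z : I → ℝ^{m+1} and w : J → ℝ^{m+1} be three times continuously differentiable curves. Define L(x,y) = (z(x)+w(y))/(x+y) − (z'(x)+w'(y))/2 on I × J and assume: (c.1) ⟨L(x,y), L(x,y)⟩_s = 1 for all (x,y); (c.2) 2⟨z(x)+w(y), z'''(x)⟩_s = (x+y)⟨z'(x)+w'(y), z'''(x)⟩_s for all (x,y); and (c.3) 2⟨z(x)+w(y), w'''(y)⟩_s = (x+y)⟨z'(x)+w'(y), w'''(y)⟩_s for all (x,y). Then on I × J: ⟨∂L/∂x, ∂L/∂x⟩_s = 0, ⟨∂L/∂y, ∂L/∂y⟩_s = 0, ⟨∂L/∂x, ∂L/∂y⟩_s = −2/(x+y)², and ∂²L/∂x∂y = (2/(x+y)²) L. (This is the converse part of case (c) of Theorem 5.1: such an L defines a minimal Lorentz surface of constant curvature one in the pseudo-sphere S^m_s(1).) -/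

import Mathlib

noncomputable def pform (s n : ℕ) (u v : Fin n → ℝ) : ℝ :=
  ∑ i : Fin n, (if (i : ℕ) < s then -(u i * v i) else u i * v i)

noncomputable def pd1 {E : Type*} [NormedAddCommGroup E] [NormedSpace ℝ E]
    (L : ℝ → ℝ → E) (x y : ℝ) : E :=
  deriv (fun t => L t y) x

noncomputable def pd2 {E : Type*} [NormedAddCommGroup E] [NormedSpace ℝ E]
    (L : ℝ → ℝ → E) (x y : ℝ) : E :=
  deriv (fun t => L x t) y

/-!
Write `L = (z + w)/(x + y) - (z' + w')/2`. A direct computation gives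
`L_xx = -(2/(x+y)) L_x - z'''/2`, its mirror image for `L_yy`, and `L_xy = (2/(x+y)²) L`.
Differentiating `⟨L, L⟩ = 1` gives `⟨L_x, L⟩ = ⟨L_y, L⟩ = 0`. Differentiating `⟨L_x, L⟩ = 0` in `x`
gives `⟨L_x, L_x⟩ = -⟨L_xx, L⟩ = ⟨z''', L⟩/2`, which vanishes by (c.2), and likewise
`⟨L_y, L_y⟩ = 0` by (c.3). Differentiating `⟨L_y, L⟩ = 0` in `x` gives
`⟨L_x, L_y⟩ = -⟨L_xy, L⟩ = -2/(x+y)²`.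
-/

open Filter Topology

section PseudoForm

variable {s n : ℕ}

lemma pform_comm (u v : Fin n → ℝ) : pform s n u v = pform s n v u := by
  unfold pform; refine Finset.sum_congr rfl fun _ _ => ?_; split <;> ring

lemma pform_sub_right (u v w : Fin n → ℝ) :
    pform s n u (v - w) = pform s n u v - pform s n u w := by
  unfold pform; rw [← Finset.sum_sub_distrib]
  refine Finset.sum_congr rfl fun _ _ => ?_; simp only [Pi.sub_apply]; split <;> ring

lemma pform_smul_right (a : ℝ) (u v : Fin n → ℝ) :
    pform s n u (a • v) = a * pform s n u v := by
  unfold pform; rw [Finset.mul_sum]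
  refine Finset.sum_congr rfl fun _ _ => ?_; simp only [Pi.smul_apply, smul_eq_mul]; split <;> ring

lemma pform_smul_left (a : ℝ) (u v : Fin n → ℝ) :
    pform s n (a • u) v = a * pform s n u v := by
  rw [pform_comm, pform_smul_right, pform_comm]

lemma HasDerivAt.pform {f g : ℝ → Fin n → ℝ} {f' g' : Fin n → ℝ} {x : ℝ}
    (hf : HasDerivAt f f' x) (hg : HasDerivAt g g' x) :
    HasDerivAt (fun t => pform s n (f t) (g t)) (pform s n f' (g x) + pform s n (f x) g') x := by
  have hfi := hasDerivAt_pi.mp hf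
  have hgi := hasDerivAt_pi.mp hg
  unfold _root_.pform
  rw [← Finset.sum_add_distrib]
  refine HasDerivAt.fun_sum fun i _ => ?_
  by_cases h : (i : ℕ) < s
  · simp only [if_pos h]; exact ((hfi i).mul (hgi i)).neg.congr_deriv (by ring)
  · simp only [if_neg h]; exact (hfi i).mul (hgi i)

lemma pform_add_eq_zero_of_eventually_const {f g : ℝ → Fin n → ℝ} {f' g' : Fin n → ℝ}
    {x c : ℝ} (hf : HasDerivAt f f' x) (hg : HasDerivAt g g' x)
    (hc : ∀ᶠ t in 𝓝 x, pform s n (f t) (g t) = c) :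
    pform s n f' (g x) + pform s n (f x) g' = 0 :=
  (hf.pform hg).unique ((hasDerivAt_const x c).congr_of_eventuallyEq hc)

lemma pform_self_deriv_eq_zero_of_eventually_const {f : ℝ → Fin n → ℝ} {f' : Fin n → ℝ}
    {x c : ℝ} (hf : HasDerivAt f f' x) (hc : ∀ᶠ t in 𝓝 x, pform s n (f t) (f t) = c) :
    pform s n (f x) f' = 0 := by
  have h := pform_add_eq_zero_of_eventually_const hf hf hc
  rw [pform_comm f'] at h
  linarith

end PseudoForm

lemma ContDiffOn.differentiableAt_and_deriv {E : Type*} [NormedAddCommGroup E]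
    [NormedSpace ℝ E] {f : ℝ → E} {U : Set ℝ} (hf : ContDiffOn ℝ 2 f U) (hU : IsOpen U)
    {x : ℝ} (hx : x ∈ U) : DifferentiableAt ℝ f x ∧ DifferentiableAt ℝ (deriv f) x :=
  ⟨(hf.differentiableOn (by norm_num)).differentiableAt (hU.mem_nhds hx),
    ((hf.deriv_of_isOpen hU (by norm_num : (1 : WithTop ℕ∞) + 1 ≤ 2)).differentiableOn
      one_ne_zero).differentiableAt (hU.mem_nhds hx)⟩

lemma HasDerivAt.one_div_pow {u : ℝ → ℝ} {x : ℝ} (hu : HasDerivAt u 1 x) (hx : u x ≠ 0) (k : ℕ) :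
    HasDerivAt (fun t => 1 / u t ^ k) (-k / u x ^ (k + 1)) x := by
  simp only [one_div]
  refine ((hu.fun_pow k).fun_inv (pow_ne_zero k hx)).congr_deriv ?_
  rcases k with _ | k
  · simp
  · rw [Nat.add_sub_cancel]; field_simp; ring

section Surface

variable {E : Type*} [NormedAddCommGroup E] [NormedSpace ℝ E] {z w : ℝ → E} {x y : ℝ}

noncomputable def curveSurface (z w : ℝ → E) (x y : ℝ) : E :=
  (1 / (x + y)) • (z x + w y) - (1 / 2 : ℝ) • (deriv z x + deriv w y)

noncomputable def curveSurfaceDx (z w : ℝ → E) (x y : ℝ) : E :=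
  (1 / (x + y)) • deriv z x - (1 / (x + y) ^ 2) • (z x + w y) - (1 / 2 : ℝ) • deriv (deriv z) x

lemma curveSurface_swap (z w : ℝ → E) (x y : ℝ) : curveSurface w z y x = curveSurface z w x y := by
  simp only [curveSurface, add_comm]

lemma pd2_curveSurface (z w : ℝ → E) (x y : ℝ) :
    pd2 (curveSurface z w) x y = pd1 (curveSurface w z) y x := by
  simp only [pd1, pd2, curveSurface_swap]

lemma hasDerivAt_curveSurface_left (hxy : x + y ≠ 0) (hz : DifferentiableAt ℝ z x)
    (hz' : DifferentiableAt ℝ (deriv z) x) :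
    HasDerivAt (fun t => curveSurface z w t y) (curveSurfaceDx z w x y) x := by
  have hinv : HasDerivAt (fun t => 1 / (t + y)) (-1 / (x + y) ^ 2) x := by
    simpa using ((hasDerivAt_id' x).add_const y).one_div_pow hxy 1
  refine ((hinv.fun_smul (hz.hasDerivAt.add_const (w y))).fun_sub
    ((hz'.hasDerivAt.add_const (deriv w y)).fun_const_smul (1 / 2 : ℝ))).congr_deriv ?_
  simp only [curveSurfaceDx]
  module

lemma hasDerivAt_curveSurfaceDx_left (hxy : x + y ≠ 0) (hz : DifferentiableAt ℝ z x)
    (hz' : DifferentiableAt ℝ (deriv z) x) (hz'' : DifferentiableAt ℝ (deriv (deriv z)) x) :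
    HasDerivAt (fun t => curveSurfaceDx z w t y)
      ((-(2 / (x + y))) • curveSurfaceDx z w x y - (1 / 2 : ℝ) • deriv (deriv (deriv z)) x) x := by
  have hinv : HasDerivAt (fun t => 1 / (t + y)) (-1 / (x + y) ^ 2) x := by
    simpa using ((hasDerivAt_id' x).add_const y).one_div_pow hxy 1
  have hinv2 : HasDerivAt (fun t => 1 / (t + y) ^ 2) (-2 / (x + y) ^ 3) x := by
    simpa using ((hasDerivAt_id' x).add_const y).one_div_pow hxy 2
  refine (((hinv.fun_smul hz'.hasDerivAt).fun_sub
    (hinv2.fun_smul (hz.hasDerivAt.add_const (w y)))).fun_sub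
    (hz''.hasDerivAt.fun_const_smul (1 / 2 : ℝ))).congr_deriv ?_
  simp only [curveSurfaceDx]
  generalize x + y = u
  module

lemma hasDerivAt_curveSurfaceDx_right (hxy : x + y ≠ 0) (hw : DifferentiableAt ℝ w y) :
    HasDerivAt (fun t => curveSurfaceDx z w x t) ((2 / (x + y) ^ 2) • curveSurface z w x y) y := by
  have hinv : HasDerivAt (fun t => 1 / (x + t)) (-1 / (x + y) ^ 2) y := by
    simpa using ((hasDerivAt_id' y).const_add x).one_div_pow hxy 1
  have hinv2 : HasDerivAt (fun t => 1 / (x + t) ^ 2) (-2 / (x + y) ^ 3) y := by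
    simpa using ((hasDerivAt_id' y).const_add x).one_div_pow hxy 2
  refine (((hinv.smul_const (deriv z x)).fun_sub
    (hinv2.fun_smul (hw.hasDerivAt.const_add (z x)))).fun_sub
    (hasDerivAt_const y ((1 / 2 : ℝ) • deriv (deriv z) x))).congr_deriv ?_
  simp only [curveSurface]
  generalize x + y = u
  module

lemma pd1_curveSurface (hxy : x + y ≠ 0) (hz : DifferentiableAt ℝ z x)
    (hz' : DifferentiableAt ℝ (deriv z) x) :
    pd1 (curveSurface z w) x y = curveSurfaceDx z w x y :=
  (hasDerivAt_curveSurface_left hxy hz hz').deriv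

lemma hasDerivAt_pd2_curveSurface_left (hxy : x + y ≠ 0) (hz : DifferentiableAt ℝ z x)
    (hw : DifferentiableAt ℝ w y) (hw' : DifferentiableAt ℝ (deriv w) y) :
    HasDerivAt (fun t => pd2 (curveSurface z w) t y)
      ((2 / (x + y) ^ 2) • curveSurface z w x y) x := by
  have hyx : y + x ≠ 0 := by rwa [add_comm]
  have hpd2 : (fun t => curveSurfaceDx w z y t) =ᶠ[𝓝 x] fun t => pd2 (curveSurface z w) t y := by
    have hcont : Continuous fun t => y + t := continuous_const_add y
    filter_upwards [hcont.continuousAt.eventually_ne hyx] with t hyt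
    rw [pd2_curveSurface, pd1_curveSurface hyt hw hw']
  have h := hasDerivAt_curveSurfaceDx_right (z := w) hyx hz
  rw [curveSurface_swap, add_comm y x] at h
  exact h.congr_of_eventuallyEq hpd2.symm

end Surface

section Pseudosphere

variable {s n : ℕ} {z w : ℝ → Fin n → ℝ} {I : Set ℝ} {x y : ℝ}

lemma pform_curveSurface_left_eq_zero {v : Fin n → ℝ} (hxy : x + y ≠ 0)
    (h : 2 * pform s n (z x + w y) v = (x + y) * pform s n (deriv z x + deriv w y) v) :
    pform s n (curveSurface z w x y) v = 0 := by
  rw [curveSurface, pform_comm, pform_sub_right, pform_smul_right, pform_smul_right,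
    pform_comm v, pform_comm v]
  field_simp
  linarith

lemma pform_curveSurface_curveSurfaceDx (hxy : x + y ≠ 0) (hz : DifferentiableAt ℝ z x)
    (hz' : DifferentiableAt ℝ (deriv z) x)
    (hunit : ∀ᶠ t in 𝓝 x, pform s n (curveSurface z w t y) (curveSurface z w t y) = 1) :
    pform s n (curveSurface z w x y) (curveSurfaceDx z w x y) = 0 :=
  pform_self_deriv_eq_zero_of_eventually_const (f := fun t => curveSurface z w t y)
    (hasDerivAt_curveSurface_left hxy hz hz') hunit

lemma pform_pd1_self_curveSurface (hI : IsOpen I) (hz : ContDiffOn ℝ 3 z I)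
    (hIy : ∀ t ∈ I, t + y ≠ 0)
    (hunit : ∀ t ∈ I, pform s n (curveSurface z w t y) (curveSurface z w t y) = 1) (hx : x ∈ I)
    (h3 : pform s n (curveSurface z w x y) (deriv (deriv (deriv z)) x) = 0) :
    pform s n (pd1 (curveSurface z w) x y) (pd1 (curveSurface z w) x y) = 0 := by
  have hz1 : ∀ t ∈ I, DifferentiableAt ℝ z t ∧ DifferentiableAt ℝ (deriv z) t :=
    fun t ht => (hz.of_le (by norm_num)).differentiableAt_and_deriv hI ht
  have hz2 : DifferentiableAt ℝ (deriv (deriv z)) x :=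
    ((hz.deriv_of_isOpen hI (by norm_num) : ContDiffOn ℝ 2 (deriv z) I).differentiableAt_and_deriv
      hI hx).2
  obtain ⟨hzx, hz'x⟩ := hz1 x hx
  have horth : ∀ᶠ t in 𝓝 x,
      pform s n (curveSurface z w t y) (curveSurfaceDx z w t y) = 0 := by
    filter_upwards [hI.mem_nhds hx] with t ht
    exact pform_curveSurface_curveSurfaceDx (hIy t ht) (hz1 t ht).1 (hz1 t ht).2
      (eventually_of_mem (hI.mem_nhds ht) hunit)
  have h := pform_add_eq_zero_of_eventually_const (hasDerivAt_curveSurface_left (hIy x hx) hzx hz'x)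
    (hasDerivAt_curveSurfaceDx_left (hIy x hx) hzx hz'x hz2) horth
  rw [pform_sub_right, pform_smul_right, pform_smul_right, horth.self_of_nhds, h3] at h
  rw [pd1_curveSurface (hIy x hx) hzx hz'x]
  linarith

lemma pform_pd1_pd2_curveSurface {J : Set ℝ} (hI : IsOpen I) (hJ : IsOpen J)
    (hz : ContDiffOn ℝ 2 z I) (hw : ContDiffOn ℝ 2 w J) (hpos : ∀ t ∈ I, ∀ u ∈ J, t + u ≠ 0)
    (hunit : ∀ t ∈ I, ∀ u ∈ J, pform s n (curveSurface z w t u) (curveSurface z w t u) = 1)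
    (hx : x ∈ I) (hy : y ∈ J) :
    pform s n (pd1 (curveSurface z w) x y) (pd2 (curveSurface z w) x y) = -2 / (x + y) ^ 2 := by
  obtain ⟨hzx, hz'x⟩ := hz.differentiableAt_and_deriv hI hx
  obtain ⟨hwy, hw'y⟩ := hw.differentiableAt_and_deriv hJ hy
  have hxy := hpos x hx y hy
  have horth : ∀ᶠ t in 𝓝 x,
      pform s n (pd2 (curveSurface z w) t y) (curveSurface z w t y) = 0 := by
    filter_upwards [hI.mem_nhds hx] with t ht
    have hyt : y + t ≠ 0 := by rw [add_comm]; exact hpos t ht y hy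
    rw [pd2_curveSurface, pd1_curveSurface hyt hwy hw'y, pform_comm, ← curveSurface_swap]
    refine pform_curveSurface_curveSurfaceDx hyt hwy hw'y
      (eventually_of_mem (hJ.mem_nhds hy) fun u hu => ?_)
    rw [curveSurface_swap]
    exact hunit t ht u hu
  have h := pform_add_eq_zero_of_eventually_const
    (hasDerivAt_pd2_curveSurface_left hxy hzx hwy hw'y)
    (hasDerivAt_curveSurface_left hxy hzx hz'x) horth
  rw [pform_smul_left, hunit x hx y hy, ← pd1_curveSurface hxy hzx hz'x, pform_comm] at h
  rw [neg_div]
  linarith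

end Pseudosphere

theorem stmt_9_general (m s : ℕ) (I J : Set ℝ)
    (hIo : IsOpen I) (hJo : IsOpen J)
    (hpos : ∀ x ∈ I, ∀ y ∈ J, 0 < x + y)
    (z w : ℝ → Fin (m + 1) → ℝ) (hz : ContDiffOn ℝ 3 z I) (hw : ContDiffOn ℝ 3 w J)
    (L : ℝ → ℝ → Fin (m + 1) → ℝ)
    (hLdef : ∀ x y : ℝ,
      L x y = (1 / (x + y)) • (z x + w y) - (1 / 2 : ℝ) • (deriv z x + deriv w y))
    (hc1 : ∀ x ∈ I, ∀ y ∈ J, pform s (m + 1) (L x y) (L x y) = 1)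
    (hc2 : ∀ x ∈ I, ∀ y ∈ J,
      2 * pform s (m + 1) (z x + w y) (deriv (deriv (deriv z)) x) =
        (x + y) * pform s (m + 1) (deriv z x + deriv w y) (deriv (deriv (deriv z)) x))
    (hc3 : ∀ x ∈ I, ∀ y ∈ J,
      2 * pform s (m + 1) (z x + w y) (deriv (deriv (deriv w)) y) =
        (x + y) * pform s (m + 1) (deriv z x + deriv w y) (deriv (deriv (deriv w)) y)) :
    ∀ x ∈ I, ∀ y ∈ J,
      pform s (m + 1) (pd1 L x y) (pd1 L x y) = 0 ∧
      pform s (m + 1) (pd2 L x y) (pd2 L x y) = 0 ∧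
      pform s (m + 1) (pd1 L x y) (pd2 L x y) = -2 / (x + y) ^ 2 ∧
      pd1 (pd2 L) x y = (2 / (x + y) ^ 2) • L x y := by
  obtain rfl : L = curveSurface z w := funext₂ hLdef
  intro x hx y hy
  have hxy : x + y ≠ 0 := (hpos x hx y hy).ne'
  obtain ⟨hzx, -⟩ := (hz.of_le (by norm_num)).differentiableAt_and_deriv hIo hx
  obtain ⟨hwy, hw'y⟩ := (hw.of_le (by norm_num)).differentiableAt_and_deriv hJo hy
  refine ⟨?_, ?_, ?_, (hasDerivAt_pd2_curveSurface_left hxy hzx hwy hw'y).deriv⟩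
  · exact pform_pd1_self_curveSurface hIo hz (fun t ht => (hpos t ht y hy).ne')
      (fun t ht => hc1 t ht y hy) hx (pform_curveSurface_left_eq_zero hxy (hc2 x hx y hy))
  · rw [pd2_curveSurface]
    refine pform_pd1_self_curveSurface hJo hw (fun t ht => by linarith [hpos x hx t ht])
      (fun t ht => by rw [curveSurface_swap]; exact hc1 x hx t ht) hy ?_
    rw [curveSurface_swap]
    exact pform_curveSurface_left_eq_zero hxy (hc3 x hx y hy)
  · exact pform_pd1_pd2_curveSurface hIo hJo (hz.of_le (by norm_num)) (hw.of_le (by norm_num))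
      (fun t ht u hu => (hpos t ht u hu).ne') hc1 hx hy

theorem stmt_9 (m s : ℕ) (hm : 2 ≤ m) (hs : s ≤ m + 1) (I J : Set ℝ)
    (hIo : IsOpen I) (hIc : I.OrdConnected) (hJo : IsOpen J) (hJc : J.OrdConnected)
    (hpos : ∀ x ∈ I, ∀ y ∈ J, 0 < x + y)
    (z w : ℝ → Fin (m + 1) → ℝ) (hz : ContDiffOn ℝ 3 z I) (hw : ContDiffOn ℝ 3 w J)
    (L : ℝ → ℝ → Fin (m + 1) → ℝ)
    (hLdef : ∀ x y : ℝ,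
      L x y = (1 / (x + y)) • (z x + w y) - (1 / 2 : ℝ) • (deriv z x + deriv w y))
    (hc1 : ∀ x ∈ I, ∀ y ∈ J, pform s (m + 1) (L x y) (L x y) = 1)
    (hc2 : ∀ x ∈ I, ∀ y ∈ J,
      2 * pform s (m + 1) (z x + w y) (deriv (deriv (deriv z)) x) =
        (x + y) * pform s (m + 1) (deriv z x + deriv w y) (deriv (deriv (deriv z)) x))
    (hc3 : ∀ x ∈ I, ∀ y ∈ J,
      2 * pform s (m + 1) (z x + w y) (deriv (deriv (deriv w)) y) =
        (x + y) * pform s (m + 1) (deriv z x + deriv w y) (deriv (deriv (deriv w)) y)) :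
    ∀ x ∈ I, ∀ y ∈ J,
      pform s (m + 1) (pd1 L x y) (pd1 L x y) = 0 ∧
      pform s (m + 1) (pd2 L x y) (pd2 L x y) = 0 ∧
      pform s (m + 1) (pd1 L x y) (pd2 L x y) = -2 / (x + y) ^ 2 ∧
      pd1 (pd2 L) x y = (2 / (x + y) ^ 2) • L x y :=
  stmt_9_general m s I J hIo hJo hpos z w hz hw L hLdef hc1 hc2 hc3
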